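/- arXiv:2111.02694 — 2 statements merged into one kernel-verified Lean document; each statement's English description precedes it below -/
import Mathlib

section
/- Let B be an infinite subset of ℕ with τ(B) > 0 and let ε ∈ (0, τ(B)/2). Then there exist a strictly increasing sequence {b_m}_{m∈ℕ} in B and, for each m, a probability vector (p_k^{(m)})_{k∈B_m} supported on B_m = { k ∈ B : b_m ≤ k < b_{m+1} }, such that lim inf_{m→∞} (−∑_{k∈B_m} p_k^{(m)} log p_k^{(m)}) / (2·∑_{k∈B_m} p_k^{(m)} log(k+1)) ≥ τ(B)/2 − ε. -/
open Filter Set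

/-- The exponent of convergence `τ(B) = inf { s ≥ 0 : ∑_{k ∈ B} k^{-s} < ∞ }`. -/
noncomputable def tauExp (B : Set ℕ) : ℝ :=
  sInf {s : ℝ | 0 ≤ s ∧ Summable fun k : B => (k : ℝ) ^ (-s)}

open scoped Classical

/-- rank of k in B -/
noncomputable def rnk (B : Set ℕ) (k : ℕ) : ℕ := ((Finset.Icc 1 k).filter (· ∈ B)).card

lemma rnk_strictMonoOn (B : Set ℕ) (hB0 : 0 ∉ B) {j k : ℕ} (hj : j ∈ B) (hk : k ∈ B)
    (hjk : j < k) : rnk B j < rnk B k := by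
  apply Finset.card_lt_card
  constructor
  · intro x hx
    simp only [Finset.mem_filter, Finset.mem_Icc] at hx ⊢
    exact ⟨⟨hx.1.1, hx.1.2.trans hjk.le⟩, hx.2⟩
  · intro hsub
    have hk1 : 1 ≤ k := Nat.one_le_iff_ne_zero.2 (fun h => hB0 (h ▸ hk))
    have : k ∈ (Finset.Icc 1 k).filter (· ∈ B) := by
      simp [Finset.mem_filter, Finset.mem_Icc, hk1, hk]
    have := hsub this
    simp only [Finset.mem_filter, Finset.mem_Icc] at this
    omega

lemma rnk_pos (B : Set ℕ) (hB0 : 0 ∉ B) {k : ℕ} (hk : k ∈ B) : 0 < rnk B k := by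
  have hk1 : 1 ≤ k := Nat.one_le_iff_ne_zero.2 (fun h => hB0 (h ▸ hk))
  apply Finset.card_pos.2
  exact ⟨k, by simp [rnk, Finset.mem_filter, Finset.mem_Icc, hk1, hk]⟩

lemma counting (B : Set ℕ) (hB0 : 0 ∉ B) (t : ℝ) (ht : 0 < t) (htτ : t < tauExp B) :
    ∀ N : ℕ, ∃ n : ℕ, N ≤ n ∧ (n : ℝ) ^ t < (((Finset.Icc 1 n).filter (· ∈ B)).card : ℝ) := by
  by_contra hcon
  push_neg at hcon
  obtain ⟨N, hN⟩ := hcon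
  set s : ℝ := (t + tauExp B) / 2 with hs
  have hts : t < s := by rw [hs]; linarith
  have hsτ : s < tauExp B := by rw [hs]; linarith
  have hs0 : 0 < s := ht.trans hts
  set u : ℝ := s / t with hu
  have hu1 : 1 < u := (one_lt_div ht).2 hts
  -- the comparison constant
  set C : ℝ := (∑ k ∈ Finset.range N, (k : ℝ) ^ (-s)) + ∑' n : ℕ, (n : ℝ) ^ (-u) with hC
  have hsummu : Summable (fun n : ℕ => (n : ℝ) ^ (-u)) :=
    Real.summable_nat_rpow.2 (by linarith)
  have key : Summable (fun k : B => (k : ℝ) ^ (-s)) := by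
    apply summable_of_sum_le (c := C)
    · intro k; exact Real.rpow_nonneg (Nat.cast_nonneg _) _
    · intro v
      -- push to a finset of ℕ
      have hval : ∑ x ∈ v, ((x : ℕ) : ℝ) ^ (-s)
          = ∑ k ∈ v.image (Subtype.val), (k : ℝ) ^ (-s) := by
        rw [Finset.sum_image (by intro a _ b _ h; exact Subtype.ext h)]
      rw [hval]
      set w := v.image (Subtype.val) with hw
      have hwB : ∀ k ∈ w, k ∈ B := by
        intro k hk
        simp only [hw, Finset.mem_image] at hk
        obtain ⟨a, _, rfl⟩ := hk
        exact a.2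
      -- split on < N
      rw [← Finset.sum_filter_add_sum_filter_not w (fun k => k < N)]
      have h1 : ∑ k ∈ w.filter (fun k => k < N), (k : ℝ) ^ (-s)
          ≤ ∑ k ∈ Finset.range N, (k : ℝ) ^ (-s) := by
        apply Finset.sum_le_sum_of_subset_of_nonneg
        · intro x hx
          simp only [Finset.mem_filter] at hx
          exact Finset.mem_range.2 hx.2
        · intro i _ _; exact Real.rpow_nonneg (Nat.cast_nonneg _) _
      have h2 : ∑ k ∈ w.filter (fun k => ¬ k < N), (k : ℝ) ^ (-s)
          ≤ ∑' n : ℕ, (n : ℝ) ^ (-u) := by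
        set w2 := w.filter (fun k => ¬ k < N) with hw2
        have hbound : ∀ k ∈ w2, (k : ℝ) ^ (-s) ≤ ((rnk B k : ℝ)) ^ (-u) := by
          intro k hk
          simp only [hw2, Finset.mem_filter, not_lt] at hk
          have hkB := hwB k hk.1
          have hkN := hk.2
          have hk1 : 1 ≤ k := Nat.one_le_iff_ne_zero.2 (fun h => hB0 (h ▸ hkB))
          have hr1 : (1 : ℝ) ≤ (rnk B k : ℝ) := by
            exact_mod_cast rnk_pos B hB0 hkB
          have hrle : ((rnk B k : ℝ)) ≤ (k : ℝ) ^ t := hN k hkN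
          -- raise to power u = s/t
          have h3 : ((rnk B k : ℝ)) ^ u ≤ ((k : ℝ) ^ t) ^ u :=
            Real.rpow_le_rpow (by linarith) hrle (le_of_lt (by linarith))
          rw [← Real.rpow_mul (Nat.cast_nonneg _)] at h3
          have htu : t * u = s := by
            rw [hu]; field_simp
          rw [htu] at h3
          rw [Real.rpow_neg (Nat.cast_nonneg k), Real.rpow_neg (Nat.cast_nonneg _)]
          have hku : (0:ℝ) < (rnk B k : ℝ) ^ u := Real.rpow_pos_of_pos (by linarith) _
          exact inv_anti₀ hku h3
        calc ∑ k ∈ w2, (k : ℝ) ^ (-s) ≤ ∑ k ∈ w2, ((rnk B k : ℝ)) ^ (-u) :=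
              Finset.sum_le_sum hbound
          _ = ∑ j ∈ w2.image (rnk B), (j : ℝ) ^ (-u) := by
              rw [Finset.sum_image]
              intro a ha b hb hab
              by_contra hne
              rcases Nat.lt_or_ge a b with h | h
              · have := rnk_strictMonoOn B hB0 (hwB a (Finset.mem_of_mem_filter a ha))
                  (hwB b (Finset.mem_of_mem_filter b hb)) h
                omega
              · rcases Nat.lt_or_ge b a with h' | h'
                · have := rnk_strictMonoOn B hB0 (hwB b (Finset.mem_of_mem_filter b hb))
                    (hwB a (Finset.mem_of_mem_filter a ha)) h'
                  omega
                · omega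
          _ ≤ ∑' n : ℕ, (n : ℝ) ^ (-u) := Summable.sum_le_tsum _
              (fun i _ => Real.rpow_nonneg (Nat.cast_nonneg _) _) hsummu
      linarith
  have : tauExp B ≤ s := csInf_le ⟨0, fun x hx => hx.1⟩ ⟨hs0.le, key⟩
  linarith

lemma step_exists (B : Set ℕ) (hBinf : B.Infinite) (hB0 : 0 ∉ B) {t ε' : ℝ}
    (ht : 0 < t) (htτ : t < tauExp B) (hε' : 0 < ε') (a : ℕ) :
    ∃ q : ℕ × ℕ, a < q.1 ∧ ((a : ℝ) + 3 + 2 ^ tauExp B ≤ (q.1 : ℝ) ^ ε') ∧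
      ((q.1 : ℝ)) ^ t < (((Finset.Icc 1 q.1).filter (· ∈ B)).card : ℝ) ∧
      q.1 < q.2 ∧ q.2 ∈ B := by
  have htend : Tendsto (fun n : ℕ => (n : ℝ) ^ ε') atTop atTop :=
    (tendsto_rpow_atTop hε').comp tendsto_natCast_atTop_atTop
  obtain ⟨M, hM⟩ := Filter.eventually_atTop.1
    (htend.eventually_ge_atTop ((a : ℝ) + 3 + 2 ^ tauExp B))
  obtain ⟨n, hn1, hn2⟩ := counting B hB0 t ht htτ (max (a + 1) M)
  obtain ⟨b', hb'B, hb'⟩ := hBinf.exists_gt n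
  refine ⟨(n, b'), ?_, hM n (le_trans (le_max_right _ _) hn1), hn2, hb', hb'B⟩
  have := le_trans (le_max_left (a+1) M) hn1
  omega

set_option maxHeartbeats 1000000 in
theorem exists_measures_on_blocks (B : Set ℕ) (hBinf : B.Infinite) (hB0 : 0 ∉ B)
    (hτ : 0 < tauExp B) (ε : ℝ) (hε : ε ∈ Set.Ioo 0 (tauExp B / 2)) :
    ∃ b : ℕ → ℕ, StrictMono b ∧ (∀ m, b m ∈ B) ∧
      ∃ p : ℕ → ℕ → ℝ,
        (∀ m k, 0 ≤ p m k) ∧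
        (∀ m k, p m k ≠ 0 → k ∈ B ∧ b m ≤ k ∧ k < b (m + 1)) ∧
        (∀ m, ∑ k ∈ Finset.Ico (b m) (b (m + 1)), p m k = 1) ∧
        tauExp B / 2 - ε ≤
          Filter.liminf (fun m =>
            (-∑ k ∈ Finset.Ico (b m) (b (m + 1)), p m k * Real.log (p m k)) /
              (2 * ∑ k ∈ Finset.Ico (b m) (b (m + 1)),
                p m k * Real.log ((k : ℝ) + 1))) Filter.atTop := by
  obtain ⟨hε0, hε2⟩ := hε
  set τ := tauExp B with hτdef
  set t : ℝ := τ - ε with htdef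
  set θ : ℝ := τ - 2 * ε with hθdef
  have ht0 : 0 < t := by rw [htdef]; linarith
  have htτ : t < τ := by rw [htdef]; linarith
  have hθ0 : 0 < θ := by rw [hθdef]; linarith
  have hθτ : θ ≤ τ := by rw [hθdef]; linarith
  have htθ : t = θ + ε := by rw [htdef, hθdef]; ring
  choose q hq1 hq2 hq3 hq4 hq5 using step_exists B hBinf hB0 ht0 htτ hε0
  obtain ⟨b₀, hb₀⟩ := hBinf.nonempty
  have hb₀1 : 1 ≤ b₀ := Nat.one_le_iff_ne_zero.2 (fun h => hB0 (h ▸ hb₀))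
  set b : ℕ → ℕ := fun m => Nat.rec b₀ (fun _ ih => (q ih).2) m with hbdef
  have hbsucc : ∀ m, b (m + 1) = (q (b m)).2 := fun m => rfl
  have hblt : ∀ m, b m < b (m + 1) := fun m => lt_trans (hq1 (b m)) (hq4 (b m))
  have hbmono : StrictMono b := strictMono_nat_of_lt_succ hblt
  have hbB : ∀ m, b m ∈ B := by
    intro m
    induction m with
    | zero => exact hb₀
    | succ m ih => exact hq5 (b m)
  have hb1 : ∀ m, 1 ≤ b m := fun m => le_trans hb₀1 (hbmono.monotone (Nat.zero_le m))
  -- the block max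
  set n : ℕ → ℕ := fun m => (q (b m)).1 with hndef
  have hn1 : ∀ m, b m < n m := fun m => hq1 (b m)
  have hn2 : ∀ m, 2 ≤ n m := fun m => by have := hb1 m; have := hn1 m; omega
  have hnb : ∀ m, n m < b (m + 1) := fun m => hq4 (b m)
  have hnpos : ∀ m, (0 : ℝ) < (n m : ℝ) := fun m => by
    exact_mod_cast lt_of_lt_of_le (by norm_num) (hn2 m)
  have hlogn : ∀ m, 0 < Real.log (n m) := fun m =>
    Real.log_pos (by exact_mod_cast hn2 m)
  -- support sets
  set S : ℕ → Finset ℕ := fun m =>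
    (Finset.Ioc (b m) (n m)).filter (fun k => k ∈ B ∧ ((n m : ℝ)) ^ θ < (k : ℝ)) with hSdef
  -- cardinality lower bound
  have hcard : ∀ m, ((n m : ℝ) + 1) ^ θ ≤ ((S m).card : ℝ) := by
    intro m
    have h3 : ((n m : ℝ)) ^ t < (((Finset.Icc 1 (n m)).filter (· ∈ B)).card : ℝ) := hq3 (b m)
    have hsub : (Finset.Icc 1 (n m)).filter (· ∈ B) ⊆
        S m ∪ Finset.Icc 1 (max (b m) ⌊((n m : ℝ)) ^ θ⌋₊) := by
      intro k hk
      simp only [Finset.mem_filter, Finset.mem_Icc] at hk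
      by_cases hka : b m < k ∧ ((n m : ℝ)) ^ θ < (k : ℝ)
      · apply Finset.mem_union_left
        simp only [hSdef, Finset.mem_filter, Finset.mem_Ioc]
        exact ⟨⟨hka.1, hk.1.2⟩, hk.2, hka.2⟩
      · apply Finset.mem_union_right
        simp only [Finset.mem_Icc]
        push_neg at hka
        refine ⟨hk.1.1, ?_⟩
        rcases le_or_gt k (b m) with h | h
        · exact le_max_of_le_left h
        · exact le_max_of_le_right (Nat.le_floor (hka h))
    have hcc : (((Finset.Icc 1 (n m)).filter (· ∈ B)).card : ℝ) ≤
        ((S m).card : ℝ) + (b m : ℝ) + ((n m : ℝ)) ^ θ := by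
      have h4 := (Finset.card_le_card hsub).trans (Finset.card_union_le _ _)
      have h5 : (Finset.Icc 1 (max (b m) ⌊((n m : ℝ)) ^ θ⌋₊)).card
          = max (b m) ⌊((n m : ℝ)) ^ θ⌋₊ := by
        rw [Nat.card_Icc]; omega
      rw [h5] at h4
      have h6 : ((max (b m) ⌊((n m : ℝ)) ^ θ⌋₊ : ℕ) : ℝ) ≤ (b m : ℝ) + ((n m : ℝ)) ^ θ := by
        have hfl : ((⌊((n m : ℝ)) ^ θ⌋₊ : ℕ) : ℝ) ≤ ((n m : ℝ)) ^ θ :=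
          Nat.floor_le (Real.rpow_nonneg (le_of_lt (hnpos m)) _)
        rcases max_cases (b m) ⌊((n m : ℝ)) ^ θ⌋₊ with ⟨hmx, _⟩ | ⟨hmx, _⟩ <;> rw [hmx]
        · have := Real.rpow_nonneg (le_of_lt (hnpos m)) θ; linarith
        · have : (0:ℝ) ≤ (b m : ℝ) := Nat.cast_nonneg _
          linarith
      calc (((Finset.Icc 1 (n m)).filter (· ∈ B)).card : ℝ)
          ≤ ((S m).card : ℝ) + ((max (b m) ⌊((n m : ℝ)) ^ θ⌋₊ : ℕ) : ℝ) := by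
            exact_mod_cast h4
        _ ≤ _ := by linarith
    have hA : ((n m : ℝ)) ^ θ * ((n m : ℝ)) ^ ε < ((S m).card : ℝ) + (b m : ℝ) + ((n m : ℝ)) ^ θ := by
      have : ((n m : ℝ)) ^ t = ((n m : ℝ)) ^ θ * ((n m : ℝ)) ^ ε := by
        rw [htθ, Real.rpow_add (hnpos m)]
      linarith [this ▸ (h3.trans_le hcc)]
    have hC : ((b m : ℝ)) + 3 + 2 ^ τ ≤ ((n m : ℝ)) ^ ε := hq2 (b m)
    have hD : (1 : ℝ) ≤ ((n m : ℝ)) ^ θ :=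
      Real.one_le_rpow (by exact_mod_cast le_trans (by norm_num) (hn2 m)) hθ0.le
    have hE : ((n m : ℝ) + 1) ^ θ ≤ 2 ^ τ * ((n m : ℝ)) ^ θ := by
      have h7 : ((n m : ℝ) + 1) ≤ 2 * (n m : ℝ) := by
        have : (1:ℝ) ≤ (n m : ℝ) := by exact_mod_cast le_trans (by norm_num) (hn2 m)
        linarith
      have h8 : ((n m : ℝ) + 1) ^ θ ≤ (2 * (n m : ℝ)) ^ θ :=
        Real.rpow_le_rpow (by positivity) h7 hθ0.le
      have h9 : (2 * (n m : ℝ)) ^ θ = (2:ℝ) ^ θ * ((n m : ℝ)) ^ θ :=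
        Real.mul_rpow (by norm_num) (le_of_lt (hnpos m))
      have h10 : (2:ℝ) ^ θ ≤ (2:ℝ) ^ τ :=
        Real.rpow_le_rpow_of_exponent_le one_le_two hθτ
      have h11 : (0:ℝ) ≤ ((n m : ℝ)) ^ θ := by linarith
      nlinarith
    have hP1 : ((n m : ℝ)) ^ θ * (((b m : ℝ)) + 3 + 2 ^ τ) ≤ ((n m : ℝ)) ^ θ * ((n m : ℝ)) ^ ε :=
      mul_le_mul_of_nonneg_left hC (by linarith)
    have hP2 : ((b m : ℝ)) * 1 ≤ ((b m : ℝ)) * ((n m : ℝ)) ^ θ :=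
      mul_le_mul_of_nonneg_left hD (Nat.cast_nonneg _)
    nlinarith
  have hcard1 : ∀ m, 1 ≤ (S m).card := by
    intro m
    have h1 : (1 : ℝ) ≤ ((n m : ℝ) + 1) ^ θ :=
      Real.one_le_rpow (by linarith [hnpos m]) hθ0.le
    have := h1.trans (hcard m)
    exact_mod_cast Nat.one_le_iff_ne_zero.2 (by
      intro h
      rw [h] at this
      norm_num at this)
  have hSsub : ∀ m, S m ⊆ Finset.Ico (b m) (b (m + 1)) := by
    intro m k hk
    simp only [hSdef, Finset.mem_filter, Finset.mem_Ioc] at hk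
    exact Finset.mem_Ico.2 ⟨le_of_lt hk.1.1, lt_of_le_of_lt hk.1.2 (hnb m)⟩
  -- the measure
  refine ⟨b, hbmono, hbB,
    fun m k => if k ∈ S m then (((S m).card : ℝ))⁻¹ else 0, ?_, ?_, ?_, ?_⟩
  · intro m k
    dsimp only
    split
    · positivity
    · exact le_refl 0
  · intro m k hk
    dsimp only at hk
    by_cases h : k ∈ S m
    · simp only [hSdef, Finset.mem_filter, Finset.mem_Ioc] at h
      exact ⟨h.2.1, le_of_lt h.1.1, lt_of_le_of_lt h.1.2 (hnb m)⟩
    · rw [if_neg h] at hk; exact absurd rfl hk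
  all_goals
    have hNpos : ∀ m, (0 : ℝ) < (((S m).card : ℝ)) := fun m => by
      exact_mod_cast hcard1 m
    have hNne : ∀ m, (((S m).card : ℝ)) ≠ 0 := fun m => ne_of_gt (hNpos m)
    have hsum : ∀ m (g : ℕ → ℝ),
        (∑ k ∈ Finset.Ico (b m) (b (m + 1)),
          (if k ∈ S m then (((S m).card : ℝ))⁻¹ else 0) * g k)
          = ∑ k ∈ S m, (((S m).card : ℝ))⁻¹ * g k := by
      intro m g
      simp only [ite_mul, zero_mul]
      rw [Finset.sum_ite_mem, Finset.inter_eq_right.2 (hSsub m)]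
  · -- sums to 1
    intro m
    have := hsum m (fun _ => 1)
    simp only [mul_one] at this
    rw [this, Finset.sum_const, nsmul_eq_mul]
    exact mul_inv_cancel₀ (hNne m)
  · -- liminf bound
    have hnum : ∀ m,
        (-∑ k ∈ Finset.Ico (b m) (b (m + 1)),
          (if k ∈ S m then (((S m).card : ℝ))⁻¹ else 0) *
            Real.log (if k ∈ S m then (((S m).card : ℝ))⁻¹ else 0))
        = Real.log ((S m).card) := by
      intro m
      have h1 : ∑ k ∈ Finset.Ico (b m) (b (m + 1)),
          (if k ∈ S m then (((S m).card : ℝ))⁻¹ else 0) *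
            Real.log (if k ∈ S m then (((S m).card : ℝ))⁻¹ else 0)
          = ∑ k ∈ Finset.Ico (b m) (b (m + 1)),
          (if k ∈ S m then (((S m).card : ℝ))⁻¹ else 0) *
            Real.log ((((S m).card : ℝ))⁻¹) := by
        apply Finset.sum_congr rfl
        intro k _
        by_cases hk : k ∈ S m <;> simp [hk]
      rw [h1, hsum m (fun _ => Real.log ((((S m).card : ℝ))⁻¹)), Finset.sum_const,
        nsmul_eq_mul, Real.log_inv]
      rw [← mul_assoc, mul_inv_cancel₀ (hNne m), one_mul, neg_neg]
    set f : ℕ → ℝ := fun m =>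
        (-∑ k ∈ Finset.Ico (b m) (b (m + 1)),
          (if k ∈ S m then (((S m).card : ℝ))⁻¹ else 0) *
            Real.log (if k ∈ S m then (((S m).card : ℝ))⁻¹ else 0)) /
          (2 * ∑ k ∈ Finset.Ico (b m) (b (m + 1)),
            (if k ∈ S m then (((S m).card : ℝ))⁻¹ else 0) * Real.log ((k : ℝ) + 1)) with hfdef
    -- denominator bounds
    have hden : ∀ m,
        θ * Real.log (n m) ≤ ∑ k ∈ S m, (((S m).card : ℝ))⁻¹ * Real.log ((k : ℝ) + 1)
        ∧ ∑ k ∈ S m, (((S m).card : ℝ))⁻¹ * Real.log ((k : ℝ) + 1) ≤ Real.log ((n m : ℝ) + 1) := by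
      intro m
      have hconst : ∀ c : ℝ, ∑ _k ∈ S m, (((S m).card : ℝ))⁻¹ * c = c := by
        intro c
        rw [Finset.sum_const, nsmul_eq_mul]
        rw [← mul_assoc, mul_inv_cancel₀ (hNne m), one_mul]
      constructor
      · calc θ * Real.log (n m) = ∑ _k ∈ S m, (((S m).card : ℝ))⁻¹ * (θ * Real.log (n m)) :=
              (hconst _).symm
          _ ≤ _ := by
            apply Finset.sum_le_sum
            intro k hk
            apply mul_le_mul_of_nonneg_left _ (le_of_lt (inv_pos.2 (hNpos m)))
            simp only [hSdef, Finset.mem_filter, Finset.mem_Ioc] at hk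
            have : ((n m : ℝ)) ^ θ ≤ (k : ℝ) + 1 := by linarith [hk.2.2]
            calc θ * Real.log (n m) = Real.log (((n m : ℝ)) ^ θ) :=
                  (Real.log_rpow (hnpos m) θ).symm
              _ ≤ Real.log ((k : ℝ) + 1) :=
                  Real.log_le_log (Real.rpow_pos_of_pos (hnpos m) θ) this
      · calc ∑ k ∈ S m, (((S m).card : ℝ))⁻¹ * Real.log ((k : ℝ) + 1)
            ≤ ∑ _k ∈ S m, (((S m).card : ℝ))⁻¹ * Real.log ((n m : ℝ) + 1) := by
              apply Finset.sum_le_sum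
              intro k hk
              apply mul_le_mul_of_nonneg_left _ (le_of_lt (inv_pos.2 (hNpos m)))
              simp only [hSdef, Finset.mem_filter, Finset.mem_Ioc] at hk
              apply Real.log_le_log (by positivity)
              have : (k : ℝ) ≤ (n m : ℝ) := by exact_mod_cast hk.1.2
              linarith
          _ = Real.log ((n m : ℝ) + 1) := hconst _
    -- numerator bounds
    have hlogN_lb : ∀ m, θ * Real.log ((n m : ℝ) + 1) ≤ Real.log ((S m).card) := by
      intro m
      calc θ * Real.log ((n m : ℝ) + 1) = Real.log (((n m : ℝ) + 1) ^ θ) :=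
            (Real.log_rpow (by linarith [hnpos m]) θ).symm
        _ ≤ Real.log ((S m).card) :=
            Real.log_le_log (Real.rpow_pos_of_pos (by linarith [hnpos m]) θ) (hcard m)
    have hlogN_ub : ∀ m, Real.log ((S m).card) ≤ Real.log (n m) := by
      intro m
      apply Real.log_le_log (hNpos m)
      have : (S m).card ≤ n m := by
        calc (S m).card ≤ (Finset.Ioc (b m) (n m)).card := Finset.card_filter_le _ _
          _ = n m - b m := Nat.card_Ioc _ _
          _ ≤ n m := Nat.sub_le _ _
      exact_mod_cast this
    have hflb : ∀ m, θ / 2 ≤ f m := by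
      intro m
      rw [hfdef]
      simp only
      rw [hnum m, hsum m (fun k => Real.log ((k : ℝ) + 1))]
      have hd := hden m
      have hDpos : 0 < ∑ k ∈ S m, (((S m).card : ℝ))⁻¹ * Real.log ((k : ℝ) + 1) := by
        exact lt_of_lt_of_le (mul_pos hθ0 (hlogn m)) hd.1
      have hlogn1 : 0 < Real.log ((n m : ℝ) + 1) := by
        apply Real.log_pos
        have := hnpos m
        linarith
      have h1 : θ / 2 = θ * Real.log ((n m : ℝ) + 1) / (2 * Real.log ((n m : ℝ) + 1)) := by
        rw [eq_div_iff (by positivity)]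
        ring
      rw [h1]
      apply div_le_div₀ (Real.log_nonneg (by exact_mod_cast hcard1 m)) (hlogN_lb m)
        (by linarith)
      linarith [hd.2]
    have hfub : ∀ m, f m ≤ 1 / (2 * θ) := by
      intro m
      rw [hfdef]
      simp only
      rw [hnum m, hsum m (fun k => Real.log ((k : ℝ) + 1))]
      have hd := hden m
      have hθl : 0 < θ * Real.log (n m) := mul_pos hθ0 (hlogn m)
      have h2 : 1 / (2 * θ) = Real.log (n m) / (2 * (θ * Real.log (n m))) := by
        rw [div_eq_div_iff (by linarith) (by linarith)]
        ring
      rw [h2]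
      apply div_le_div₀ (le_of_lt (hlogn m)) (hlogN_ub m) (by linarith)
      linarith [hd.1]
    have hbdd : IsBoundedUnder (· ≤ ·) atTop f :=
      isBoundedUnder_of ⟨1 / (2 * θ), hfub⟩
    calc τ / 2 - ε = θ / 2 := by rw [hθdef]; ring
      _ ≤ liminf f atTop :=
          le_liminf_of_le hbdd.isCoboundedUnder_ge (Filter.Eventually.of_forall hflb)
end

section
/- For every n ∈ ℕ and every x, y irrational in (0,1] lying in the same n-cylinder I(a_1,…,a_n), the ratio of derivatives of the n-th iterate of the Gauss map satisfies |(T^n)'(x)| / |(T^n)'(y)| ≤ C for a constant C > 1 independent of n, x, y and the cylinder. -/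
open Filter Set

/-- The Gauss map `T(x) = 1/x - ⌊1/x⌋`. -/
noncomputable def gaussMap (x : ℝ) : ℝ := x⁻¹ - ⌊x⁻¹⌋

/-- The partial quotients of the continued fraction expansion:
`cfPQ n x = a_{n+1}(x) = ⌊1 / T^n(x)⌋`. -/
noncomputable def cfPQ (n : ℕ) (x : ℝ) : ℕ := ⌊(gaussMap^[n] x)⁻¹⌋₊

lemma gauss_step {x : ℝ} (hx : Irrational x) (h : x ∈ Set.Ioo (0 : ℝ) 1) :
    Irrational (gaussMap x) ∧ gaussMap x ∈ Set.Ioo (0 : ℝ) 1 := by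
  have hf : gaussMap x = Int.fract x⁻¹ := rfl
  have hirr : Irrational (gaussMap x) := (hx.inv).sub_intCast _
  have h0 : gaussMap x ≠ 0 := fun hz => (hirr.ne_int 0) (by simpa using hz)
  exact ⟨hirr, lt_of_le_of_ne (hf ▸ Int.fract_nonneg x⁻¹) (Ne.symm h0),
    hf ▸ Int.fract_lt_one x⁻¹⟩

lemma gauss_iter {x : ℝ} (hx : Irrational x) (h : x ∈ Set.Ioo (0 : ℝ) 1) (n : ℕ) :
    Irrational (gaussMap^[n] x) ∧ gaussMap^[n] x ∈ Set.Ioo (0 : ℝ) 1 := by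
  induction n with
  | zero => exact ⟨hx, h⟩
  | succ n ih =>
      rw [Function.iterate_succ_apply']
      exact gauss_step ih.1 ih.2

/-- key identity: `x⁻¹ = a₁ + T x` with `a₁ ≥ 1`. -/
lemma gauss_inv_eq {x : ℝ} (hx : Irrational x) (h : x ∈ Set.Ioo (0 : ℝ) 1) :
    x⁻¹ = (cfPQ 0 x : ℝ) + gaussMap x ∧ 1 ≤ cfPQ 0 x := by
  have hx0 : 0 < x := h.1
  have hinv1 : 1 ≤ x⁻¹ := one_le_inv_iff₀.mpr ⟨hx0, le_of_lt h.2⟩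
  have hcast : ((cfPQ 0 x : ℕ) : ℝ) = (⌊x⁻¹⌋ : ℝ) := by
    simp only [cfPQ, Function.iterate_zero_apply]
    exact natCast_floor_eq_intCast_floor (by positivity)
  constructor
  · rw [hcast]; simp [gaussMap]
  · simp only [cfPQ, Function.iterate_zero_apply]
    exact Nat.one_le_floor_iff _ |>.mpr hinv1

lemma cfPQ_shift (k i : ℕ) (x : ℝ) : cfPQ i (gaussMap^[k] x) = cfPQ (i + k) x := by
  simp [cfPQ, ← Function.iterate_add_apply]

lemma cfPQ_shift1 (i : ℕ) (x : ℝ) : cfPQ i (gaussMap x) = cfPQ (i + 1) x := by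
  have := cfPQ_shift 1 i x
  rwa [Function.iterate_one] at this

lemma gauss_diff_eq {x y : ℝ} (hx : Irrational x) (hy : Irrational y)
    (hx1 : x ∈ Set.Ioo (0 : ℝ) 1) (hy1 : y ∈ Set.Ioo (0 : ℝ) 1) (hd : cfPQ 0 x = cfPQ 0 y) :
    x - y = x * y * (gaussMap y - gaussMap x) := by
  obtain ⟨ex, -⟩ := gauss_inv_eq hx hx1
  obtain ⟨ey, -⟩ := gauss_inv_eq hy hy1
  have hx0 : x ≠ 0 := ne_of_gt hx1.1
  have hy0 : y ≠ 0 := ne_of_gt hy1.1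
  have h1 : x - y = x * y * (y⁻¹ - x⁻¹) := by field_simp
  rw [h1, ex, ey, hd]; ring

lemma gauss_half {x : ℝ} (hx : Irrational x) (hx1 : x ∈ Set.Ioo (0 : ℝ) 1) :
    x * gaussMap x ≤ 1 / 2 := by
  obtain ⟨ex, ha⟩ := gauss_inv_eq hx hx1
  obtain ⟨-, hg⟩ := gauss_step hx hx1
  have h1 : x * x⁻¹ = 1 := mul_inv_cancel₀ (ne_of_gt hx1.1)
  have ha' : (1 : ℝ) ≤ (cfPQ 0 x : ℝ) := by exact_mod_cast ha
  nlinarith [hx1.1, hg.2, hg.1, mul_nonneg (le_of_lt hx1.1) (sub_nonneg.mpr ha'),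
    mul_nonneg (le_of_lt hx1.1) (le_of_lt (sub_pos.mpr hg.2))]

/-- Contraction: points with the same first `m` digits are `2·2⁻ᵐ` close. -/
lemma gauss_contraction : ∀ m : ℕ, ∀ x y : ℝ, Irrational x → Irrational y →
    x ∈ Set.Ioo (0 : ℝ) 1 → y ∈ Set.Ioo (0 : ℝ) 1 →
    (∀ i < m, cfPQ i x = cfPQ i y) → |x - y| ≤ 2 * (1 / 2 : ℝ) ^ m := by
  intro m
  induction m using Nat.strong_induction_on with
  | _ m ih =>
  intro x y hx hy hx1 hy1 hd
  match m with
  | 0 =>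
      rcases abs_cases (x - y) with ⟨h, -⟩ | ⟨h, -⟩ <;>
        simp only [pow_zero, mul_one] <;> rw [h] <;>
        nlinarith [hx1.1, hx1.2, hy1.1, hy1.2]
  | 1 =>
      have : |x - y| ≤ 1 := by
        rcases abs_cases (x - y) with ⟨h, -⟩ | ⟨h, -⟩ <;> rw [h] <;>
          nlinarith [hx1.1, hx1.2, hy1.1, hy1.2]
      calc |x - y| ≤ 1 := this
        _ ≤ 2 * (1 / 2 : ℝ) ^ 1 := by norm_num
  | (m + 2) =>
      obtain ⟨hix', hx'⟩ := gauss_step hx hx1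
      obtain ⟨hiy', hy'⟩ := gauss_step hy hy1
      obtain ⟨hix'', hx''⟩ := gauss_step hix' hx'
      obtain ⟨hiy'', hy''⟩ := gauss_step hiy' hy'
      have h2x : gaussMap (gaussMap x) = gaussMap^[2] x := by
        simp [Function.iterate_succ_apply]
      have h2y : gaussMap (gaussMap y) = gaussMap^[2] y := by
        simp [Function.iterate_succ_apply]
      have hd'' : ∀ i < m, cfPQ i (gaussMap (gaussMap x)) = cfPQ i (gaussMap (gaussMap y)) := by
        intro i hi
        rw [h2x, h2y, cfPQ_shift 2 i x, cfPQ_shift 2 i y]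
        exact hd (i + 2) (by omega)
      have ihm := ih m (by omega) _ _ hix'' hiy'' hx'' hy'' hd''
      have e1 : x - y = x * y * (gaussMap y - gaussMap x) :=
        gauss_diff_eq hx hy hx1 hy1 (hd 0 (by omega))
      have e2 : gaussMap x - gaussMap y =
          gaussMap x * gaussMap y * (gaussMap (gaussMap y) - gaussMap (gaussMap x)) := by
        apply gauss_diff_eq hix' hiy' hx' hy'
        rw [cfPQ_shift1 0 x, cfPQ_shift1 0 y]
        exact hd 1 (by omega)
      have habs : |x - y| = (x * gaussMap x) * (y * gaussMap y) *
          |gaussMap (gaussMap x) - gaussMap (gaussMap y)| := by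
        have : x - y = ((x * gaussMap x) * (y * gaussMap y)) *
            (gaussMap (gaussMap x) - gaussMap (gaussMap y)) := by
          rw [e1]
          have : gaussMap y - gaussMap x = -(gaussMap x - gaussMap y) := by ring
          rw [this, e2]; ring
        rw [this, abs_mul, abs_of_nonneg (mul_nonneg (mul_nonneg hx1.1.le hx'.1.le)
          (mul_nonneg hy1.1.le hy'.1.le))]
      have hhx := gauss_half hx hx1
      have hhy := gauss_half hy hy1
      have hpx : 0 ≤ x * gaussMap x := mul_nonneg hx1.1.le hx'.1.le
      have hpy : 0 ≤ y * gaussMap y := mul_nonneg hy1.1.le hy'.1.le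
      have habs' : 0 ≤ |gaussMap (gaussMap x) - gaussMap (gaussMap y)| := abs_nonneg _
      calc |x - y| = (x * gaussMap x) * (y * gaussMap y) *
            |gaussMap (gaussMap x) - gaussMap (gaussMap y)| := habs
        _ ≤ (1 / 2) * (1 / 2) * (2 * (1 / 2 : ℝ) ^ m) := by
            apply mul_le_mul _ ihm habs' (by positivity)
            exact mul_le_mul hhx hhy hpy (by norm_num)
        _ = 2 * (1 / 2 : ℝ) ^ (m + 2) := by ring

/-- One-digit agreement gives multiplicative closeness. -/
lemma gauss_ratio {m : ℕ} (hm : 1 ≤ m) {x y : ℝ} (hx : Irrational x) (hy : Irrational y)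
    (hx1 : x ∈ Set.Ioo (0 : ℝ) 1) (hy1 : y ∈ Set.Ioo (0 : ℝ) 1)
    (hd : ∀ i < m, cfPQ i x = cfPQ i y) :
    y / x ≤ 1 + 4 * (1 / 2 : ℝ) ^ m := by
  obtain ⟨ex, hax⟩ := gauss_inv_eq hx hx1
  obtain ⟨ey, -⟩ := gauss_inv_eq hy hy1
  obtain ⟨hix', hx'⟩ := gauss_step hx hx1
  obtain ⟨hiy', hy'⟩ := gauss_step hy hy1
  have hd0 : cfPQ 0 x = cfPQ 0 y := hd 0 (by omega)
  have hd' : ∀ i < m - 1, cfPQ i (gaussMap x) = cfPQ i (gaussMap y) := by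
    intro i hi
    rw [cfPQ_shift1 i x, cfPQ_shift1 i y]
    exact hd (i + 1) (by omega)
  have hc := gauss_contraction (m - 1) _ _ hix' hiy' hx' hy' hd'
  have hpow : 2 * (1 / 2 : ℝ) ^ (m - 1) = 4 * (1 / 2 : ℝ) ^ m := by
    obtain ⟨k, rfl⟩ : ∃ k, m = k + 1 := ⟨m - 1, by omega⟩
    simp [pow_succ]
    ring
  rw [hpow] at hc
  have hx0 : x ≠ 0 := ne_of_gt hx1.1
  have hy0 : y ≠ 0 := ne_of_gt hy1.1
  have hyx : y / x = ((cfPQ 0 x : ℝ) + gaussMap x) / ((cfPQ 0 x : ℝ) + gaussMap y) := by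
    rw [← ex, hd0, ← ey]
    field_simp
  rw [hyx]
  have ha' : (1 : ℝ) ≤ (cfPQ 0 x : ℝ) := by exact_mod_cast hax
  have hden : (0 : ℝ) < (cfPQ 0 x : ℝ) + gaussMap y := by
    have := hy'.1; linarith
  rw [div_le_iff₀ hden]
  have ht : gaussMap x - gaussMap y ≤ 4 * (1 / 2 : ℝ) ^ m :=
    le_trans (le_abs_self _) hc
  have hs : (0 : ℝ) ≤ 4 * (1 / 2 : ℝ) ^ m := by positivity
  nlinarith [hy'.1, mul_nonneg hs (by linarith [hy'.1] : (0:ℝ) ≤ (cfPQ 0 x : ℝ) + gaussMap y - 1)]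

lemma gauss_hasDerivAt {z : ℝ} (hz : Irrational z) (h0 : 0 < z) :
    HasDerivAt gaussMap (-(z ^ 2)⁻¹) z := by
  have hz0 : z ≠ 0 := ne_of_gt h0
  have h1 : HasDerivAt (fun w : ℝ => w⁻¹ - (⌊z⁻¹⌋ : ℝ)) (-(z ^ 2)⁻¹) z := by
    simpa using (hasDerivAt_inv hz0).sub_const (⌊z⁻¹⌋ : ℝ)
  apply h1.congr_of_eventuallyEq
  have hcont : ContinuousAt (fun w : ℝ => w⁻¹) z := continuousAt_inv₀ hz0
  have hmem : z⁻¹ ∈ Set.Ioo ((⌊z⁻¹⌋ : ℝ)) ((⌊z⁻¹⌋ : ℝ) + 1) :=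
    ⟨lt_of_le_of_ne (Int.floor_le _) (Ne.symm ((hz.inv).ne_int _)), Int.lt_floor_add_one _⟩
  have hev : ∀ᶠ w in nhds z, (w : ℝ)⁻¹ ∈ Set.Ioo ((⌊z⁻¹⌋ : ℝ)) ((⌊z⁻¹⌋ : ℝ) + 1) :=
    hcont.eventually_mem (isOpen_Ioo.mem_nhds hmem)
  filter_upwards [hev] with w hw
  have : ⌊w⁻¹⌋ = ⌊z⁻¹⌋ := by
    rw [Int.floor_eq_iff]
    exact ⟨le_of_lt hw.1, hw.2⟩
  simp [gaussMap, this]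

lemma gauss_iter_hasDerivAt {x : ℝ} (hx : Irrational x) (h : x ∈ Set.Ioo (0 : ℝ) 1) (n : ℕ) :
    HasDerivAt (gaussMap^[n]) (∏ k ∈ Finset.range n, -((gaussMap^[k] x) ^ 2)⁻¹) x := by
  induction n with
  | zero => simpa using hasDerivAt_id x
  | succ n ih =>
      rw [Function.iterate_succ']
      have hz := gauss_iter hx h n
      have h2 := gauss_hasDerivAt hz.1 hz.2.1
      have := h2.comp x ih
      rw [Finset.prod_range_succ]
      exact this.congr_deriv (by ring)

theorem bounded_distortion :
    ∃ C : ℝ, 1 < C ∧ ∀ (n : ℕ) (a : Fin n → ℕ), (∀ i, 1 ≤ a i) →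
      ∀ x y : ℝ, Irrational x → Irrational y →
        x ∈ Set.Ioc (0 : ℝ) 1 → y ∈ Set.Ioc (0 : ℝ) 1 →
        (∀ i : Fin n, cfPQ i.val x = a i) → (∀ i : Fin n, cfPQ i.val y = a i) →
        |deriv (gaussMap^[n]) x| / |deriv (gaussMap^[n]) y| ≤ C := by
  refine ⟨Real.exp 8, ?_, ?_⟩
  · have := Real.add_one_le_exp (8 : ℝ); linarith
  intro n a _ x y hx hy hxI hyI hax hay
  have hx1 : x ∈ Set.Ioo (0 : ℝ) 1 := ⟨hxI.1, lt_of_le_of_ne hxI.2 hx.ne_one⟩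
  have hy1 : y ∈ Set.Ioo (0 : ℝ) 1 := ⟨hyI.1, lt_of_le_of_ne hyI.2 hy.ne_one⟩
  have hdig : ∀ i < n, cfPQ i x = cfPQ i y := fun i hi =>
    (hax ⟨i, hi⟩).trans (hay ⟨i, hi⟩).symm
  have hDx := (gauss_iter_hasDerivAt hx hx1 n).deriv
  have hDy := (gauss_iter_hasDerivAt hy hy1 n).deriv
  rw [hDx, hDy, Finset.abs_prod, Finset.abs_prod]
  have hux : ∀ k, 0 < gaussMap^[k] x := fun k => (gauss_iter hx hx1 k).2.1
  have hvy : ∀ k, 0 < gaussMap^[k] y := fun k => (gauss_iter hy hy1 k).2.1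
  have habsu : ∀ k ∈ Finset.range n, |(-((gaussMap^[k] x) ^ 2)⁻¹)| = ((gaussMap^[k] x) ^ 2)⁻¹ :=
    fun k _ => by rw [abs_neg, abs_inv, abs_of_pos (pow_pos (hux k) 2)]
  have habsv : ∀ k ∈ Finset.range n, |(-((gaussMap^[k] y) ^ 2)⁻¹)| = ((gaussMap^[k] y) ^ 2)⁻¹ :=
    fun k _ => by rw [abs_neg, abs_inv, abs_of_pos (pow_pos (hvy k) 2)]
  rw [Finset.prod_congr rfl habsu, Finset.prod_congr rfl habsv, ← Finset.prod_div_distrib]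
  have key : ∀ k ∈ Finset.range n, ((gaussMap^[k] x) ^ 2)⁻¹ / ((gaussMap^[k] y) ^ 2)⁻¹ ≤
      Real.exp (8 * (1 / 2 : ℝ) ^ (n - k)) := by
    intro k hk
    simp only [Finset.mem_range] at hk
    have hm : 1 ≤ n - k := by omega
    have hdig' : ∀ i < n - k, cfPQ i (gaussMap^[k] x) = cfPQ i (gaussMap^[k] y) := by
      intro i hi
      rw [cfPQ_shift k i x, cfPQ_shift k i y]
      exact hdig (i + k) (by omega)
    have hr := gauss_ratio hm (gauss_iter hx hx1 k).1 (gauss_iter hy hy1 k).1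
      (gauss_iter hx hx1 k).2 (gauss_iter hy hy1 k).2 hdig'
    have hr0 : 0 ≤ gaussMap^[k] y / gaussMap^[k] x := div_nonneg (hvy k).le (hux k).le
    have heq : ((gaussMap^[k] x) ^ 2)⁻¹ / ((gaussMap^[k] y) ^ 2)⁻¹ =
        (gaussMap^[k] y / gaussMap^[k] x) ^ 2 := by
      have h1 : gaussMap^[k] x ≠ 0 := (hux k).ne'
      have h2 : gaussMap^[k] y ≠ 0 := (hvy k).ne'
      field_simp
    rw [heq]
    have hs : (0 : ℝ) ≤ 4 * (1 / 2 : ℝ) ^ (n - k) := by positivity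
    have hexp := Real.add_one_le_exp (4 * (1 / 2 : ℝ) ^ (n - k))
    calc (gaussMap^[k] y / gaussMap^[k] x) ^ 2
        ≤ (1 + 4 * (1 / 2 : ℝ) ^ (n - k)) ^ 2 := pow_le_pow_left₀ hr0 hr 2
      _ ≤ Real.exp (4 * (1 / 2 : ℝ) ^ (n - k)) ^ 2 :=
          pow_le_pow_left₀ (by linarith) (by linarith) 2
      _ = Real.exp (8 * (1 / 2 : ℝ) ^ (n - k)) := by
          rw [← Real.exp_nat_mul]
          congr 1
          push_cast
          ring
  have hnonneg : ∀ k ∈ Finset.range n,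
      0 ≤ ((gaussMap^[k] x) ^ 2)⁻¹ / ((gaussMap^[k] y) ^ 2)⁻¹ :=
    fun k _ => div_nonneg (by positivity) (by positivity)
  have hsum : ∑ k ∈ Finset.range n, (8 : ℝ) * (1 / 2 : ℝ) ^ (n - k) ≤ 8 := by
    have h1 : ∑ k ∈ Finset.range n, (8 : ℝ) * (1 / 2 : ℝ) ^ (n - k) =
        ∑ j ∈ Finset.range n, (8 : ℝ) * (1 / 2 : ℝ) ^ (j + 1) := by
      rw [← Finset.sum_range_reflect (fun j => (8 : ℝ) * (1 / 2 : ℝ) ^ (j + 1)) n]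
      apply Finset.sum_congr rfl
      intro k hk
      simp only [Finset.mem_range] at hk
      congr 2
      omega
    have h2 : ∀ N : ℕ, ∑ j ∈ Finset.range N, (8 : ℝ) * (1 / 2 : ℝ) ^ (j + 1) =
        8 - 8 * (1 / 2 : ℝ) ^ N := by
      intro N
      induction N with
      | zero => simp
      | succ N ih => rw [Finset.sum_range_succ, ih]; ring
    rw [h1, h2]
    have : (0 : ℝ) ≤ 8 * (1 / 2 : ℝ) ^ n := by positivity
    linarith
  calc ∏ k ∈ Finset.range n, ((gaussMap^[k] x) ^ 2)⁻¹ / ((gaussMap^[k] y) ^ 2)⁻¹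
      ≤ ∏ k ∈ Finset.range n, Real.exp (8 * (1 / 2 : ℝ) ^ (n - k)) :=
        Finset.prod_le_prod hnonneg key
    _ = Real.exp (∑ k ∈ Finset.range n, 8 * (1 / 2 : ℝ) ^ (n - k)) := (Real.exp_sum _ _).symm
    _ ≤ Real.exp 8 := Real.exp_le_exp.mpr hsum
end
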